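/- For every J > 0, γ ≥ 0, every L a positive multiple of 4, every θ*, φ* ∈ (−π,π], and every site r ∈ T_L, the partial derivative of H_L with respect to the variable θ_r, evaluated at the configuration whose deviation variables vanish identically (ϑ ≡ 0), is equal to zero; i.e., the Taylor expansion of the torus Hamiltonian about any such ground state has no linear terms in the deviation variables. -/

import Mathlib

open MeasureTheory Real Filter

noncomputable section
open scoped Classical

/-- The torus `T_L = (ℤ/L)²`. -/
abbrev Torus (L : ℕ) := ZMod L × ZMod L

/-- The torus Hamiltonian `H_L` of the nnn antiferromagnet, in angle variables. -/
def torusH (L : ℕ) (hL : L ≠ 0) (J γ : ℝ) (θ : Torus L → ℝ) : ℝ :=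
  haveI : NeZero L := ⟨hL⟩
  J * ∑ r : Torus L,
      (2 + Real.cos (θ r - θ (r + (1, 1))) + Real.cos (θ r - θ (r + (1, -1))))
    + J * γ * ∑ r : Torus L,
        (Real.cos (θ r - θ (r + (1, 0))) + Real.cos (θ r - θ (r + (0, 1))))

/-- The ground-state offset determined by the overall angle `θ*` and the relative
angle `φ*` between the Néel states of the even and the odd sublattice. -/
def offset (L : ℕ) (θs φs : ℝ) (r : Torus L) : ℝ :=
  if Even r.1.val then (if Even r.2.val then θs else θs + φs + π)
  else (if Even r.2.val then θs + φs else θs + π)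

/-- The harmonic (spin-wave) Hamiltonian `I_{L,φ*}` acting on deviation variables. -/
def harmH (L : ℕ) (hL : L ≠ 0) (β J γ φs : ℝ) (ϑ : Torus L → ℝ) : ℝ :=
  haveI : NeZero L := ⟨hL⟩
  β * J / 2 * ∑ r : Torus L,
      ((ϑ r - ϑ (r + (1, 1))) ^ 2 + (ϑ r - ϑ (r + (1, -1))) ^ 2)
    + β * J * γ / 2 * Real.cos φs * ∑ r : Torus L,
        ((ϑ r - ϑ (r + (1, 0))) ^ 2 + (ϑ r - ϑ (r + (0, 1))) ^ 2)

/-- The constrained Gaussian integral `Q_{L,Δ}(φ*)`. -/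
def Q (L : ℕ) (hL : L ≠ 0) (β J γ Δ φs : ℝ) : ℝ :=
  haveI : NeZero L := ⟨hL⟩
  ∫ ϑ : Torus L → ℝ,
    Real.exp (-harmH L hL β J γ φs ϑ) * (if ∀ r, |ϑ r| < Δ then (1 : ℝ) else 0)
      * (β * J / (2 * π)) ^ (((L : ℝ) ^ 2) / 2)

/-- The massive Gaussian partition function `Q_L(φ*,λ)`. -/
def Qmass (L : ℕ) (hL : L ≠ 0) (β J γ φs lam : ℝ) : ℝ :=
  haveI : NeZero L := ⟨hL⟩
  ∫ ϑ : Torus L → ℝ,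
    Real.exp (-harmH L hL β J γ φs ϑ - β * J * lam / 2 * ∑ r : Torus L, (ϑ r) ^ 2)
      * (β * J / (2 * π)) ^ (((L : ℝ) ^ 2) / 2)

/-- The finite-volume constrained free energy `F_{L,Δ}(φ*)` (with reference angle `θ*`),
defined via integration of the angles over the unit circle, parametrized by `(-π,π]`
(`dθ_r` = Lebesgue measure on the unit circle), written in deviation variables. -/
def FL (L : ℕ) (hL : L ≠ 0) (J γ β Δ θs φs : ℝ) : ℝ :=
  haveI : NeZero L := ⟨hL⟩
  (-(1 / (L : ℝ) ^ 2)) * Real.log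
    (∫ ϑ in Set.univ.pi (fun _ : Torus L => Set.Ioc (-π) π),
      Real.exp (-(β * torusH L hL J γ (fun r => ϑ r + offset L θs φs r)))
        * (if ∀ r, |ϑ r| < Δ then (1 : ℝ) else 0)
        * (β * J / (2 * π)) ^ (((L : ℝ) ^ 2) / 2))

/-- The massive Gaussian probability measure `P_λ` on `ℝ^{T_L}`. -/
def gaussP (L : ℕ) (hL : L ≠ 0) (β J γ φs lam : ℝ) : Measure (Torus L → ℝ) :=
  haveI : NeZero L := ⟨hL⟩
  letI μ : Measure (Torus L → ℝ) := volume.withDensity fun ϑ =>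
    ENNReal.ofReal (Real.exp (-harmH L hL β J γ φs ϑ - β * J * lam / 2 * ∑ r : Torus L, (ϑ r) ^ 2))
  (μ Set.univ)⁻¹ • μ

/-!
Since `L` is even, the ground state `offset` depends only on the class of a site in
`(ZMod 2)²`. The derivative in `θ_r` of a bond sum `∑ a, cos (θ_a - θ_{a+s})` is
`sin (θ_{r-s} - θ_r) - sin (θ_r - θ_{r+s})`, and `r - s`, `r + s` lie in the same class, so at the
ground state it equals `-2 sin (θ_r - θ_{r+s})`. Diagonal neighbours are antiparallel, so the
diagonal bonds contribute `sin (±π) = 0`; the angles from `r` to its two nearest neighbours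
differ by `π`, so the two nearest-neighbour contributions cancel.
-/

open Function

section
variable {G : Type*} [AddCommGroup G] [Fintype G] [DecidableEq G]

theorem hasDerivAt_sum_comp_sub_add_update {g g' : ℝ → ℝ} (hg : ∀ x, HasDerivAt g (g' x) x)
    (θ : G → ℝ) (r s : G) :
    HasDerivAt (fun t => ∑ a, g (update θ r t a - update θ r t (a + s)))
      (g' (θ r - θ (r + s)) - g' (θ (r - s) - θ r)) (θ r) := by
  set e : G → ℝ := Pi.single r 1
  have hcoord (a : G) : HasDerivAt (fun t => update θ r t a) (e a) (θ r) :=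
    hasDerivAt_pi.1 (hasDerivAt_update θ r (θ r)) a
  have hterm (a : G) : HasDerivAt (fun t => g (update θ r t a - update θ r t (a + s)))
      (g' (θ a - θ (a + s)) * (e a - e (a + s))) (θ r) := by
    have h : HasDerivAt g (g' (θ a - θ (a + s)))
        (update θ r (θ r) a - update θ r (θ r) (a + s)) := by
      rw [update_eq_self]; exact hg _
    exact h.comp (θ r) ((hcoord a).sub (hcoord (a + s)))
  refine (HasDerivAt.fun_sum (u := Finset.univ) fun a _ => hterm a).congr_deriv ?_
  have hshift (a : G) : a + s = r ↔ a = r - s := eq_sub_iff_add_eq.symm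
  simp only [e, Pi.single_apply, hshift, mul_sub, mul_ite, mul_one, mul_zero,
    Finset.sum_sub_distrib, Finset.sum_ite_eq', Finset.mem_univ, ite_true, sub_add_cancel]

def bondTorque (θ : G → ℝ) (r s : G) : ℝ :=
  sin (θ (r - s) - θ r) - sin (θ r - θ (r + s))

theorem hasDerivAt_sum_cos_sub_add_update (θ : G → ℝ) (r s : G) :
    HasDerivAt (fun t => ∑ a, cos (update θ r t a - update θ r t (a + s)))
      (bondTorque θ r s) (θ r) := by
  refine (hasDerivAt_sum_comp_sub_add_update (fun x => hasDerivAt_cos x) θ r s).congr_deriv ?_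
  rw [bondTorque]; ring

end

theorem hasDerivAt_torusH_update {L : ℕ} (hL : L ≠ 0) [NeZero L] (J γ : ℝ)
    (θ : Torus L → ℝ) (r : Torus L) :
    HasDerivAt (fun t => torusH L hL J γ (update θ r t))
      (J * (bondTorque θ r (1, 1) + bondTorque θ r (1, -1))
        + J * γ * (bondTorque θ r (1, 0) + bondTorque θ r (0, 1))) (θ r) := by
  have h := hasDerivAt_sum_cos_sub_add_update θ r
  simp only [torusH, Finset.sum_add_distrib]
  refine (((((hasDerivAt_const _ _).add (h (1, 1))).add (h (1, -1))).const_mul J).add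
    (((h (1, 0)).add (h (0, 1))).const_mul (J * γ))).congr_deriv ?_
  ring

theorem ZMod.even_val_iff_castHom_eq_zero {L : ℕ} [NeZero L] (hL2 : 2 ∣ L) (x : ZMod L) :
    Even x.val ↔ ZMod.castHom hL2 (ZMod 2) x = 0 := by
  rw [ZMod.castHom_apply, ZMod.cast_eq_val, ZMod.natCast_eq_zero_iff_even]

def parity {L : ℕ} (hL2 : 2 ∣ L) : Torus L →+* ZMod 2 × ZMod 2 :=
  (ZMod.castHom hL2 (ZMod 2)).prodMap (ZMod.castHom hL2 (ZMod 2))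

def neel (θs φs : ℝ) (p : ZMod 2 × ZMod 2) : ℝ :=
  if p.1 = 0 then (if p.2 = 0 then θs else θs + φs + π)
  else (if p.2 = 0 then θs + φs else θs + π)

theorem offset_eq_neel_parity {L : ℕ} [NeZero L] (hL2 : 2 ∣ L) (θs φs : ℝ) (r : Torus L) :
    offset L θs φs r = neel θs φs (parity hL2 r) := by
  simp only [offset, neel, parity, ZMod.even_val_iff_castHom_eq_zero hL2, RingHom.coe_prodMap,
    Prod.map_fst, Prod.map_snd]
  congr

theorem parity_mk {L : ℕ} (hL2 : 2 ∣ L) (a b : ZMod L) :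
    parity hL2 (a, b) = (ZMod.castHom hL2 (ZMod 2) a, ZMod.castHom hL2 (ZMod 2) b) :=
  rfl

theorem bondTorque_offset {L : ℕ} [NeZero L] (hL2 : 2 ∣ L) (θs φs : ℝ) (r s : Torus L) :
    bondTorque (offset L θs φs) r s
      = -2 * sin (neel θs φs (parity hL2 r) - neel θs φs (parity hL2 r + parity hL2 s)) := by
  have hsub : parity hL2 (r - s) = parity hL2 (r + s) := by
    rw [map_sub, map_add, CharTwo.sub_eq_add]
  simp only [bondTorque, offset_eq_neel_parity hL2, hsub, map_add]
  generalize neel θs φs (parity hL2 r) = a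
  generalize neel θs φs (parity hL2 r + parity hL2 s) = b
  rw [← neg_sub a b, sin_neg]
  ring

theorem sin_neel_sub_neel_add_one_one (θs φs : ℝ) (p : ZMod 2 × ZMod 2) :
    sin (neel θs φs p - neel θs φs (p + (1, 1))) = 0 := by
  fin_cases p <;> simp +decide [neel]

theorem sin_neel_sub_neel_add_one_zero_add_sin (θs φs : ℝ) (p : ZMod 2 × ZMod 2) :
    sin (neel θs φs p - neel θs φs (p + (1, 0))) + sin (neel θs φs p - neel θs φs (p + (0, 1)))
      = 0 := by
  fin_cases p <;> simp +decide [neel] <;> ring_nf <;> simp [sin_add_pi, sin_sub_pi]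

theorem no_linear_terms_general (J γ : ℝ)
    (L : ℕ) (hL : L ≠ 0) (hL4 : ∃ m : ℕ, 0 < m ∧ L = 4 * m)
    (θs φs : ℝ)
    (r : Torus L) :
    HasDerivAt
      (fun t : ℝ =>
        torusH L hL J γ (Function.update (fun r' => offset L θs φs r') r t))
      0 (offset L θs φs r) := by
  have : NeZero L := ⟨hL⟩
  have hL2 : 2 ∣ L := by
    obtain ⟨m, -, rfl⟩ := hL4
    exact Dvd.dvd.mul_right (by norm_num) m
  have h11 : parity hL2 ((1, 1) : Torus L) = (1, 1) := by rw [parity_mk, map_one]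
  have h1m1 : parity hL2 ((1, -1) : Torus L) = (1, 1) := by
    rw [parity_mk, map_one, map_neg, map_one]; decide
  have h10 : parity hL2 ((1, 0) : Torus L) = (1, 0) := by rw [parity_mk, map_one, map_zero]
  have h01 : parity hL2 ((0, 1) : Torus L) = (0, 1) := by rw [parity_mk, map_one, map_zero]
  refine (hasDerivAt_torusH_update hL J γ (offset L θs φs) r).congr_deriv ?_
  simp only [bondTorque_offset hL2, h11, h1m1, h10, h01, sin_neel_sub_neel_add_one_one]
  linear_combination (-2 * J * γ) * sin_neel_sub_neel_add_one_zero_add_sin θs φs (parity hL2 r)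

/-- the Taylor expansion of `H_L` about any ground state (vanishing
deviation variables) has no linear terms: the partial derivative of `H_L` in each
single spin variable `θ_r`, evaluated at the ground state, vanishes. -/
theorem no_linear_terms (J γ : ℝ) (hJ : 0 < J) (hγ : 0 ≤ γ)
    (L : ℕ) (hL : L ≠ 0) (hL4 : ∃ m : ℕ, 0 < m ∧ L = 4 * m)
    (θs φs : ℝ) (hθs : θs ∈ Set.Ioc (-π) π) (hφs : φs ∈ Set.Ioc (-π) π)
    (r : Torus L) :
    HasDerivAt
      (fun t : ℝ =>
        torusH L hL J γ (Function.update (fun r' => offset L θs φs r') r t))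
      0 (offset L θs φs r) :=
  no_linear_terms_general J γ L hL hL4 θs φs r

end
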